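/- arXiv:1911.06384 — 4 statements merged into one kernel-verified Lean document; each statement's English description precedes it below -/
import Mathlib

section
/- Let q > 2, n = q² − 1, and let a, b be integers with 0 ≤ a ≤ q − 1 and 1 ≤ b ≤ q. Define A = ⋃_{i=0}^{a} C_i and B = ⋃_{i=1}^{b} C_{q−i}, where C_i denotes the q-ary cyclotomic coset of i mod n. Then |A| = 2a + 1 and |B| = 2b − ⌊b/q⌋. -/
/-- The `q`-ary cyclotomic coset of `i` modulo `n`, as a subset of `ZMod n`. -/
def cycCoset (q n i : ℕ) : Set (ZMod n) :=
  {x | ∃ j : ℕ, x = (i : ZMod n) * (q : ZMod n) ^ j}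

lemma cycCoset_eq_pair {q n : ℕ} (hq2 : (q : ZMod n) ^ 2 = 1) (i : ℕ) :
    cycCoset q n i = {(i : ZMod n), ((i * q : ℕ) : ZMod n)} := by
  ext x
  simp only [cycCoset, Set.mem_setOf_eq, Set.mem_insert_iff, Set.mem_singleton_iff]
  constructor
  · rintro ⟨j, rfl⟩
    rcases Nat.even_or_odd j with ⟨k, rfl⟩ | ⟨k, rfl⟩
    · left
      rw [show k + k = 2 * k by ring, pow_mul, hq2, one_pow, mul_one]
    · right
      push_cast
      rw [pow_succ, pow_mul, hq2, one_pow, one_mul]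
  · rintro (rfl | rfl)
    · exact ⟨0, by simp⟩
    · exact ⟨1, by push_cast; ring⟩

lemma union_pair_eq (s : Finset ℕ) (f g : ℕ → ℕ) (n : ℕ) :
    (⋃ i ∈ s, ({((f i : ℕ) : ZMod n), ((g i : ℕ) : ZMod n)} : Set (ZMod n))) =
    ↑((s.image f ∪ s.image g).image (Nat.cast : ℕ → ZMod n)) := by
  ext x
  simp only [Set.mem_iUnion, Set.mem_insert_iff, Set.mem_singleton_iff,
    Finset.coe_image, Set.mem_image, Finset.mem_coe, Finset.mem_union, Finset.mem_image]
  aesop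

lemma cast_injOn {n : ℕ} [NeZero n] {t : Finset ℕ} (h : ∀ x ∈ t, x < n) :
    Set.InjOn (Nat.cast : ℕ → ZMod n) t := by
  intro x hx y hy hxy
  have h1 := ZMod.val_cast_of_lt (h x hx)
  have h2 := ZMod.val_cast_of_lt (h y hy)
  have := congrArg ZMod.val hxy
  omega

theorem card_union_cyclotomic_cosets (q a b : ℕ) (hq : 2 < q)
    (ha : a ≤ q - 1) (hb1 : 1 ≤ b) (hb2 : b ≤ q) :
    (⋃ i ∈ Finset.range (a + 1), cycCoset q (q ^ 2 - 1) i).ncard = 2 * a + 1 ∧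
    (⋃ i ∈ Finset.Icc 1 b, cycCoset q (q ^ 2 - 1) (q - i)).ncard = 2 * b - b / q := by
  have hq0 : 0 < q := by omega
  have hqsq : 9 ≤ q ^ 2 := by nlinarith
  haveI : NeZero (q ^ 2 - 1) := ⟨by omega⟩
  have hq2 : (q : ZMod (q ^ 2 - 1)) ^ 2 = 1 := by
    have h1 : ((q ^ 2 - 1 : ℕ) : ZMod (q ^ 2 - 1)) = 0 := ZMod.natCast_self _
    have h2 : (q ^ 2 : ℕ) = (q ^ 2 - 1) + 1 := by omega
    calc (q : ZMod (q ^ 2 - 1)) ^ 2 = ((q ^ 2 : ℕ) : ZMod (q ^ 2 - 1)) := by push_cast; ring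
      _ = (((q ^ 2 - 1) + 1 : ℕ) : ZMod (q ^ 2 - 1)) := by rw [← h2]
      _ = 1 := by rw [Nat.cast_add, h1, Nat.cast_one, zero_add]
  constructor
  · -- Part A
    have hA : (⋃ i ∈ Finset.range (a + 1), cycCoset q (q ^ 2 - 1) i) =
        ↑(((Finset.range (a + 1)).image id ∪ (Finset.range (a + 1)).image (· * q)).image
          (Nat.cast : ℕ → ZMod (q ^ 2 - 1))) := by
      rw [← union_pair_eq (Finset.range (a + 1)) id (· * q) (q ^ 2 - 1)]
      apply Set.iUnion_congr
      intro i
      apply Set.iUnion_congr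
      intro _
      simpa using cycCoset_eq_pair hq2 i
    rw [hA, Set.ncard_coe_finset]
    have hbound : ∀ x ∈ (Finset.range (a + 1)).image id ∪ (Finset.range (a + 1)).image (· * q),
        x < q ^ 2 - 1 := by
      intro x hx
      simp only [Finset.mem_union, Finset.mem_image, Finset.mem_range, id] at hx
      have hq3 : 3 * q ≤ q ^ 2 := by nlinarith
      have hqq : (q - 1) * q = q * q - q := by rw [Nat.sub_mul, one_mul]
      have hsq : q * q = q ^ 2 := (sq q).symm
      rcases hx with ⟨i, hi, rfl⟩ | ⟨i, hi, rfl⟩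
      · omega
      · have : i * q ≤ (q - 1) * q := Nat.mul_le_mul_right q (by omega)
        omega
    rw [Finset.card_image_of_injOn (cast_injOn hbound)]
    have hinter : (Finset.range (a + 1)).image id ∩ (Finset.range (a + 1)).image (· * q)
        = {0} := by
      ext x
      simp only [Finset.mem_inter, Finset.mem_image, Finset.mem_range, id,
        Finset.mem_singleton]
      constructor
      · rintro ⟨⟨i, hi, rfl⟩, j, hj, hjx⟩
        rcases Nat.eq_zero_or_pos j with rfl | hjpos
        · simpa using hjx.symm
        · have : q ≤ j * q := Nat.le_mul_of_pos_left q hjpos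
          omega
      · rintro rfl
        exact ⟨⟨0, by omega, rfl⟩, 0, by omega, by omega⟩
    have hcard := Finset.card_union_add_card_inter ((Finset.range (a + 1)).image id)
      ((Finset.range (a + 1)).image (· * q))
    rw [hinter] at hcard
    have h1 : ((Finset.range (a + 1)).image id).card = a + 1 := by
      rw [Finset.image_id, Finset.card_range]
    have h2 : ((Finset.range (a + 1)).image (· * q)).card = a + 1 := by
      rw [Finset.card_image_of_injective _ (mul_left_injective₀ (by omega : q ≠ 0)),
        Finset.card_range]
    simp only [Finset.card_singleton, h1, h2] at hcard
    omega
  · -- Part B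
    have hB : (⋃ i ∈ Finset.Icc 1 b, cycCoset q (q ^ 2 - 1) (q - i)) =
        ↑(((Finset.Icc 1 b).image (q - ·) ∪ (Finset.Icc 1 b).image (fun i => (q - i) * q)).image
          (Nat.cast : ℕ → ZMod (q ^ 2 - 1))) := by
      rw [← union_pair_eq (Finset.Icc 1 b) (q - ·) (fun i => (q - i) * q) (q ^ 2 - 1)]
      apply Set.iUnion_congr
      intro i
      apply Set.iUnion_congr
      intro _
      simpa using cycCoset_eq_pair hq2 (q - i)
    rw [hB, Set.ncard_coe_finset]
    have hbound : ∀ x ∈ (Finset.Icc 1 b).image (q - ·) ∪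
        (Finset.Icc 1 b).image (fun i => (q - i) * q), x < q ^ 2 - 1 := by
      intro x hx
      simp only [Finset.mem_union, Finset.mem_image, Finset.mem_Icc] at hx
      have hq3 : 3 * q ≤ q ^ 2 := by nlinarith
      have hqq : (q - 1) * q = q * q - q := by rw [Nat.sub_mul, one_mul]
      have hsq : q * q = q ^ 2 := (sq q).symm
      rcases hx with ⟨i, hi, rfl⟩ | ⟨i, hi, rfl⟩
      · omega
      · have : (q - i) * q ≤ (q - 1) * q := Nat.mul_le_mul_right q (by omega)
        omega
    rw [Finset.card_image_of_injOn (cast_injOn hbound)]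
    have h1 : ((Finset.Icc 1 b).image (q - ·)).card = b := by
      rw [Finset.card_image_of_injOn (by
        intro x hx y hy hxy
        simp only [Finset.coe_Icc, Set.mem_Icc] at hx hy
        have hxy' : q - x = q - y := hxy
        omega)]
      simp [Nat.card_Icc]
    have h2 : ((Finset.Icc 1 b).image (fun i => (q - i) * q)).card = b := by
      rw [Finset.card_image_of_injOn (by
        intro x hx y hy hxy
        simp only [Finset.coe_Icc, Set.mem_Icc] at hx hy
        have hxy' : (q - x) * q = (q - y) * q := hxy
        have := Nat.eq_of_mul_eq_mul_right hq0 hxy'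
        omega)]
      simp [Nat.card_Icc]
    have hcard := Finset.card_union_add_card_inter ((Finset.Icc 1 b).image (q - ·))
      ((Finset.Icc 1 b).image (fun i => (q - i) * q))
    by_cases hbq : b = q
    · have hinter : (Finset.Icc 1 b).image (q - ·) ∩
          (Finset.Icc 1 b).image (fun i => (q - i) * q) = {0} := by
        ext x
        simp only [Finset.mem_inter, Finset.mem_image, Finset.mem_Icc, Finset.mem_singleton]
        constructor
        · rintro ⟨⟨i, hi, rfl⟩, j, hj, hjx⟩
          rcases Nat.eq_zero_or_pos (q - j) with h | hjpos
          · rw [h, zero_mul] at hjx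
            omega
          · have : q ≤ (q - j) * q := Nat.le_mul_of_pos_left q hjpos
            omega
        · rintro rfl
          refine ⟨⟨q, by omega, by omega⟩, q, by omega, ?_⟩
          simp
      rw [hinter] at hcard
      simp only [Finset.card_singleton, h1, h2] at hcard
      have : b / q = 1 := by rw [hbq]; exact Nat.div_self hq0
      omega
    · have hblt : b < q := by omega
      have hinter : (Finset.Icc 1 b).image (q - ·) ∩
          (Finset.Icc 1 b).image (fun i => (q - i) * q) = ∅ := by
        ext x
        simp only [Finset.mem_inter, Finset.mem_image, Finset.mem_Icc, Finset.notMem_empty,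
          iff_false, not_and]
        rintro ⟨i, hi, rfl⟩ ⟨j, hj, hjx⟩
        have : q ≤ (q - j) * q := Nat.le_mul_of_pos_left q (by omega)
        omega
      rw [hinter] at hcard
      simp only [Finset.card_empty, h1, h2] at hcard
      have : b / q = 0 := Nat.div_eq_of_lt hblt
      omega
end

section
/- Let q > 2, n = q² − 1, and integers a, b with 0 ≤ a ≤ q − 1, 1 ≤ b ≤ q. With A = ⋃_{i=0}^{a} C_i and B = ⋃_{i=1}^{b} C_{q−i}: if a < q − b then A ∩ B = ∅, and if a ≥ q − b and b < q then |A ∩ B| = 2(a − (q − b) + 1) − ⌊b/q⌋. -/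
lemma zmod_cast_inj {n x y : ℕ} (hx : x < n) (hy : y < n)
    (h : (x : ZMod n) = y) : x = y := by
  have h1 := ZMod.val_cast_of_lt hx
  have h2 := ZMod.val_cast_of_lt hy
  rw [← h1, ← h2, h]

lemma q_sq_one (q : ℕ) (hq : 2 < q) : ((q : ZMod (q^2-1)))^2 = 1 := by
  have h2 : ((q : ZMod (q^2-1)))^2 = ((q^2 : ℕ) : ZMod (q^2-1)) := by push_cast; ring
  rw [h2]
  have h1 : 1 ≤ q^2 := Nat.one_le_pow _ _ (by omega)
  have h3 : (q^2 : ℕ) = (q^2 - 1) + 1 := by omega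
  rw [h3]
  push_cast [ZMod.natCast_self]
  ring

lemma cycCoset_eq (q i : ℕ) (hq : 2 < q) :
    cycCoset q (q^2 - 1) i = {(i : ZMod (q^2-1)), ((i*q : ℕ) : ZMod (q^2-1))} := by
  have hq2 := q_sq_one q hq
  ext x
  simp only [cycCoset, Set.mem_setOf_eq, Set.mem_insert_iff, Set.mem_singleton_iff]
  constructor
  · rintro ⟨j, rfl⟩
    rcases Nat.even_or_odd j with ⟨m, rfl⟩ | ⟨m, rfl⟩
    · left
      have : ((q:ZMod (q^2-1)))^(m+m) = (((q:ZMod (q^2-1)))^2)^m := by ring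
      rw [this, hq2, one_pow, mul_one]
    · right
      have : ((q:ZMod (q^2-1)))^(2*m+1) = (((q:ZMod (q^2-1)))^2)^m * q := by ring
      rw [this, hq2, one_pow, one_mul]
      push_cast; ring
  · rintro (rfl | rfl)
    · exact ⟨0, by simp⟩
    · exact ⟨1, by push_cast; ring⟩

theorem inter_union_cyclotomic_cosets (q a b : ℕ) (hq : 2 < q)
    (ha : a ≤ q - 1) (hb1 : 1 ≤ b) (hb2 : b ≤ q) :
    (a < q - b →
      (⋃ i ∈ Finset.range (a + 1), cycCoset q (q ^ 2 - 1) i) ∩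
        (⋃ i ∈ Finset.Icc 1 b, cycCoset q (q ^ 2 - 1) (q - i)) = ∅) ∧
    (q - b ≤ a → b < q →
      ((⋃ i ∈ Finset.range (a + 1), cycCoset q (q ^ 2 - 1) i) ∩
        (⋃ i ∈ Finset.Icc 1 b, cycCoset q (q ^ 2 - 1) (q - i))).ncard =
        2 * (a - (q - b) + 1) - b / q) := by
  have h3q : 3*q ≤ q^2 := by nlinarith
  have hn : 8 ≤ q^2 - 1 := by omega
  -- bounds helpers
  have hlt1 : ∀ i : ℕ, i ≤ q - 1 → i < q^2 - 1 := by intro i h; omega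
  have hlt2 : ∀ i : ℕ, i ≤ q - 1 → i * q < q^2 - 1 := by
    intro i h
    have e0 : i * q ≤ (q-1) * q := Nat.mul_le_mul_right q h
    have e : (q-1)*q = q^2 - q := by rw [Nat.sub_mul, one_mul, ← pow_two]
    omega
  constructor
  · -- disjoint case
    intro hab
    have hbq : b < q := by omega
    ext x
    simp only [Set.mem_inter_iff, Set.mem_iUnion, Finset.mem_range, Finset.mem_Icc,
      cycCoset_eq _ _ hq, Set.mem_insert_iff, Set.mem_singleton_iff, Set.mem_empty_iff_false,
      iff_false, not_and]
    rintro ⟨i, hi, hx1⟩ ⟨i', hi', hx2⟩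
    have hia : i ≤ a := by omega
    have hqi' : 1 ≤ q - i' ∧ q - i' ≤ q - 1 := by omega
    have e1 : q ≤ (q - i') * q := by
      have := Nat.mul_le_mul_right q hqi'.1; simpa using this
    rcases hx1 with rfl | rfl <;> rcases hx2 with h | h
    · have := zmod_cast_inj (hlt1 i (by omega)) (hlt1 _ hqi'.2) h
      omega
    · have := zmod_cast_inj (hlt1 i (by omega)) (hlt2 _ hqi'.2) h
      omega
    · have := zmod_cast_inj (hlt2 i (by omega)) (hlt1 _ hqi'.2) h
      rcases Nat.eq_zero_or_pos i with rfl | hi0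
      · simp at this; omega
      · have : q ≤ i * q := by have := Nat.mul_le_mul_right q hi0; simpa using this
        omega
    · have := zmod_cast_inj (hlt2 i (by omega)) (hlt2 _ hqi'.2) h
      have : i = q - i' := Nat.eq_of_mul_eq_mul_right (by omega) this
      omega
  · -- counting case
    intro h1 h2
    have hbq0 : b / q = 0 := Nat.div_eq_of_lt h2
    set F : Finset (ZMod (q^2-1)) :=
      ((Finset.Icc (q-a) b).image fun i => ((q - i : ℕ) : ZMod (q^2-1))) ∪
      ((Finset.Icc (q-a) b).image fun i => (((q - i) * q : ℕ) : ZMod (q^2-1))) with hF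
    have hset : (⋃ i ∈ Finset.range (a + 1), cycCoset q (q ^ 2 - 1) i) ∩
        (⋃ i ∈ Finset.Icc 1 b, cycCoset q (q ^ 2 - 1) (q - i)) = ↑F := by
      ext x
      simp only [Set.mem_inter_iff, Set.mem_iUnion, Finset.mem_range, Finset.mem_Icc,
        cycCoset_eq _ _ hq, Set.mem_insert_iff, Set.mem_singleton_iff, hF,
        Finset.coe_union, Finset.coe_image, Set.mem_union, Set.mem_image,
        Finset.mem_coe, Finset.mem_Icc]
      constructor
      · rintro ⟨⟨i, hi, hx1⟩, ⟨i', hi', hx2⟩⟩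
        have hia : i ≤ a := by omega
        have hqi' : 1 ≤ q - i' ∧ q - i' ≤ q - 1 := by omega
        have e1 : q ≤ (q - i') * q := by
          have := Nat.mul_le_mul_right q hqi'.1; simpa using this
        rcases hx1 with rfl | rfl <;> rcases hx2 with h | h
        · have := zmod_cast_inj (hlt1 i (by omega)) (hlt1 _ hqi'.2) h
          exact Or.inl ⟨i', ⟨by omega, hi'.2⟩, h.symm⟩
        · have := zmod_cast_inj (hlt1 i (by omega)) (hlt2 _ hqi'.2) h
          omega
        · have hh := zmod_cast_inj (hlt2 i (by omega)) (hlt1 _ hqi'.2) h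
          rcases Nat.eq_zero_or_pos i with rfl | hi0
          · simp at hh; omega
          · have : q ≤ i * q := by have := Nat.mul_le_mul_right q hi0; simpa using this
            omega
        · have hh := zmod_cast_inj (hlt2 i (by omega)) (hlt2 _ hqi'.2) h
          have : i = q - i' := Nat.eq_of_mul_eq_mul_right (by omega) hh
          exact Or.inr ⟨i', ⟨by omega, hi'.2⟩, h.symm⟩
      · rintro (⟨i, hi, rfl⟩ | ⟨i, hi, rfl⟩)
        · refine ⟨⟨q - i, by omega, Or.inl rfl⟩, ⟨i, ⟨by omega, hi.2⟩, Or.inl rfl⟩⟩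
        · refine ⟨⟨q - i, by omega, Or.inr rfl⟩, ⟨i, ⟨by omega, hi.2⟩, Or.inr rfl⟩⟩
    rw [hset, Set.ncard_coe_finset, hF]
    have hinj1 : Set.InjOn (fun i : ℕ => ((q - i : ℕ) : ZMod (q^2-1))) (Finset.Icc (q-a) b) := by
      intro i hi j hj h
      simp only [Finset.coe_Icc, Set.mem_Icc] at hi hj
      have := zmod_cast_inj (hlt1 (q-i) (by omega)) (hlt1 (q-j) (by omega)) h
      omega
    have hinj2 : Set.InjOn (fun i : ℕ => (((q - i) * q : ℕ) : ZMod (q^2-1)))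
        (Finset.Icc (q-a) b) := by
      intro i hi j hj h
      simp only [Finset.coe_Icc, Set.mem_Icc] at hi hj
      have hh := zmod_cast_inj (hlt2 (q-i) (by omega)) (hlt2 (q-j) (by omega)) h
      have := Nat.eq_of_mul_eq_mul_right (show 0 < q by omega) hh
      omega
    have hdisj : Disjoint ((Finset.Icc (q-a) b).image fun i => ((q - i : ℕ) : ZMod (q^2-1)))
        ((Finset.Icc (q-a) b).image fun i => (((q - i) * q : ℕ) : ZMod (q^2-1))) := by
      rw [Finset.disjoint_left]
      rintro x hx1 hx2
      simp only [Finset.mem_image, Finset.mem_Icc] at hx1 hx2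
      obtain ⟨i, hi, rfl⟩ := hx1
      obtain ⟨j, hj, hh⟩ := hx2
      have := zmod_cast_inj (hlt2 (q-j) (by omega)) (hlt1 (q-i) (by omega)) hh
      have e1 : q ≤ (q - j) * q := by
        have := Nat.mul_le_mul_right q (show 1 ≤ q - j by omega); simpa using this
      omega
    rw [Finset.card_union_of_disjoint hdisj, Finset.card_image_of_injOn hinj1,
      Finset.card_image_of_injOn hinj2, Nat.card_Icc]
    omega
end

section
/- Let q ≥ 3 be a prime power, n = q⁴ − 1, and for 2 ≤ a ≤ q² − 1 let Z_a = C_0 ∪ C_{q²+1} ∪ (⋃_{i=2}^{a} C_{q²+i}) ⊆ Z/nZ. Then (−q·Z_a) ∩ Z_a = C_0 = {0}, where −q·Z_a = {−q x mod n : x ∈ Z_a}. -/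
lemma key_nat (q s t : ℕ) (hq3 : 3 ≤ q) (hs1 : 1 ≤ s) (hs2 : s ≤ q ^ 2 - 1)
    (ht1 : 1 ≤ t) (ht2 : t ≤ q ^ 2 - 1) :
    ¬ (q ^ 4 - 1) ∣ (q ^ 3 + q ^ 2 + s * q + t) := by
  intro h
  have hq2 : 9 ≤ q ^ 2 := by
    calc (9 : ℕ) = 3 ^ 2 := by norm_num
      _ ≤ q ^ 2 := Nat.pow_le_pow_left hq3 2
  have h1 : s + 1 ≤ q ^ 2 := by omega
  have h2 : t + 1 ≤ q ^ 2 := by omega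
  have hmul1 : s * q + q ≤ q ^ 3 := by
    calc s * q + q = (s + 1) * q := by ring
      _ ≤ q ^ 2 * q := Nat.mul_le_mul_right q h1
      _ = q ^ 3 := by ring
  have hA : 3 * q ^ 3 ≤ q ^ 4 := by
    calc 3 * q ^ 3 ≤ q * q ^ 3 := Nat.mul_le_mul_right _ hq3
      _ = q ^ 4 := by ring
  have hB : 3 * q ^ 2 ≤ q ^ 3 := by
    calc 3 * q ^ 2 ≤ q * q ^ 2 := Nat.mul_le_mul_right _ hq3
      _ = q ^ 3 := by ring
  have hN : q ^ 3 + q ^ 2 + s * q + t + 1 < q ^ 4 := by linarith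
  have hpos : 0 < q ^ 3 + q ^ 2 + s * q + t :=
    lt_of_lt_of_le ht1 (Nat.le_add_left t _)
  have := Nat.le_of_dvd hpos h
  omega

/-- The possible shapes of elements of `Z_a`. -/
def goodForm (q : ℕ) (x : ZMod (q ^ 4 - 1)) : Prop :=
  x = 0 ∨ ∃ i : ℕ, 1 ≤ i ∧ i ≤ q ^ 2 - 1 ∧
    (x = ((q ^ 2 + i : ℕ) : ZMod (q ^ 4 - 1)) ∨
      x = ((1 + i * q ^ 2 : ℕ) : ZMod (q ^ 4 - 1)))

lemma hQ4_lemma (q : ℕ) (hq3 : 3 ≤ q) : ((q : ZMod (q ^ 4 - 1))) ^ 4 = 1 := by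
  have h81 : 81 ≤ q ^ 4 := by
    calc (81 : ℕ) = 3 ^ 4 := by norm_num
      _ ≤ q ^ 4 := Nat.pow_le_pow_left hq3 4
  have h1 : (q ^ 4 : ℕ) = (q ^ 4 - 1) + 1 := by omega
  calc ((q : ZMod (q ^ 4 - 1))) ^ 4 = ((q ^ 4 : ℕ) : ZMod (q ^ 4 - 1)) := by push_cast; ring
    _ = (((q ^ 4 - 1 : ℕ) : ZMod (q ^ 4 - 1)) + 1) := by rw [h1]; push_cast; ring
    _ = 1 := by rw [ZMod.natCast_self]; ring

lemma form_key (q : ℕ) (hq3 : 3 ≤ q) (u v : ZMod (q ^ 4 - 1))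
    (hu : goodForm q u) (hv : goodForm q v)
    (h : (q : ZMod (q ^ 4 - 1)) * u + v = 0) : v = 0 := by
  have hQ4 := hQ4_lemma q hq3
  rcases hu with rfl | ⟨i, hi1, hi2, hu⟩
  · simpa using h
  rcases hv with rfl | ⟨j, hj1, hj2, hv⟩
  · rfl
  exfalso
  rcases hu with rfl | rfl <;> rcases hv with rfl | rfl
  · -- u = q²+i, v = q²+j
    have hz : ((q ^ 3 + q ^ 2 + i * q + j : ℕ) : ZMod (q ^ 4 - 1)) = 0 := by
      push_cast at h ⊢
      linear_combination h
    exact key_nat q i j hq3 hi1 hi2 hj1 hj2 ((ZMod.natCast_eq_zero_iff _ _).1 hz)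
  · -- u = q²+i, v = 1+j q²
    have hz : ((q ^ 3 + q ^ 2 + j * q + i : ℕ) : ZMod (q ^ 4 - 1)) = 0 := by
      push_cast at h ⊢
      linear_combination (q : ZMod (q ^ 4 - 1)) ^ 3 * h -
        ((q : ZMod (q ^ 4 - 1)) ^ 2 + (i : ZMod (q ^ 4 - 1)) +
          (j : ZMod (q ^ 4 - 1)) * (q : ZMod (q ^ 4 - 1))) * hQ4
    exact key_nat q j i hq3 hj1 hj2 hi1 hi2 ((ZMod.natCast_eq_zero_iff _ _).1 hz)
  · -- u = 1+i q², v = q²+j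
    have hz : ((q ^ 3 + q ^ 2 + j * q + i : ℕ) : ZMod (q ^ 4 - 1)) = 0 := by
      push_cast at h ⊢
      linear_combination (q : ZMod (q ^ 4 - 1)) * h - (i : ZMod (q ^ 4 - 1)) * hQ4
    exact key_nat q j i hq3 hj1 hj2 hi1 hi2 ((ZMod.natCast_eq_zero_iff _ _).1 hz)
  · -- u = 1+i q², v = 1+j q²
    have hz : ((q ^ 3 + q ^ 2 + i * q + j : ℕ) : ZMod (q ^ 4 - 1)) = 0 := by
      push_cast at h ⊢
      linear_combination (q : ZMod (q ^ 4 - 1)) ^ 2 * h -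
        ((i : ZMod (q ^ 4 - 1)) * (q : ZMod (q ^ 4 - 1)) + (j : ZMod (q ^ 4 - 1))) * hQ4
    exact key_nat q i j hq3 hi1 hi2 hj1 hj2 ((ZMod.natCast_eq_zero_iff _ _).1 hz)

lemma pow_sq (q : ℕ) (hq3 : 3 ≤ q) (j : ℕ) :
    ((q : ZMod (q ^ 4 - 1)) ^ 2) ^ j = 1 ∨
      ((q : ZMod (q ^ 4 - 1)) ^ 2) ^ j = (q : ZMod (q ^ 4 - 1)) ^ 2 := by
  have hQ4 := hQ4_lemma q hq3
  rcases Nat.even_or_odd j with ⟨m, rfl⟩ | ⟨m, rfl⟩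
  · left
    rw [← pow_mul, show 2 * (m + m) = 4 * m by ring, pow_mul, hQ4, one_pow]
  · right
    rw [← pow_mul, show 2 * (2 * m + 1) = 4 * m + 2 by ring, pow_add, pow_mul, hQ4,
      one_pow, one_mul]

lemma mem_Za_form (q a : ℕ) (hq3 : 3 ≤ q) (ha2 : a ≤ q ^ 2 - 1) (x : ZMod (q ^ 4 - 1))
    (hx : x ∈ cycCoset (q ^ 2) (q ^ 4 - 1) 0 ∪ cycCoset (q ^ 2) (q ^ 4 - 1) (q ^ 2 + 1) ∪
        ⋃ i ∈ Finset.Icc 2 a, cycCoset (q ^ 2) (q ^ 4 - 1) (q ^ 2 + i)) :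
    goodForm q x := by
  have hQ4 := hQ4_lemma q hq3
  have hq2 : 9 ≤ q ^ 2 := by
    calc (9 : ℕ) = 3 ^ 2 := by norm_num
      _ ≤ q ^ 2 := Nat.pow_le_pow_left hq3 2
  rcases hx with (⟨j, hj⟩ | ⟨j, hj⟩) | hx
  · left; simpa using hj
  · rcases pow_sq q hq3 j with hp | hp
    · right
      refine ⟨1, le_refl 1, by omega, Or.inl ?_⟩
      rw [hj]; push_cast; rw [hp]; ring
    · right
      refine ⟨1, le_refl 1, by omega, Or.inr ?_⟩
      rw [hj]; push_cast; rw [hp]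
      linear_combination hQ4
  · simp only [Set.mem_iUnion] at hx
    obtain ⟨i, hi, j, hj⟩ := hx
    simp only [Finset.mem_Icc] at hi
    rcases pow_sq q hq3 j with hp | hp
    · right
      refine ⟨i, by omega, by omega, Or.inl ?_⟩
      rw [hj]; push_cast; rw [hp]; ring
    · right
      refine ⟨i, by omega, by omega, Or.inr ?_⟩
      rw [hj]; push_cast; rw [hp]
      linear_combination hQ4

theorem neg_q_image_inter_q4 (q a : ℕ) (hq : IsPrimePow q) (hq3 : 3 ≤ q)
    (ha1 : 2 ≤ a) (ha2 : a ≤ q ^ 2 - 1) :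
    let n := q ^ 4 - 1
    let Za : Set (ZMod n) :=
      cycCoset (q ^ 2) n 0 ∪ cycCoset (q ^ 2) n (q ^ 2 + 1) ∪
        ⋃ i ∈ Finset.Icc 2 a, cycCoset (q ^ 2) n (q ^ 2 + i)
    ((fun x : ZMod n => -(q : ZMod n) * x) '' Za) ∩ Za = cycCoset (q ^ 2) n 0 ∧
      cycCoset (q ^ 2) n 0 = {(0 : ZMod n)} := by
  intro n Za
  have hC0 : cycCoset (q ^ 2) n 0 = {(0 : ZMod n)} := by
    ext x
    simp [cycCoset]
  have h0Za : (0 : ZMod n) ∈ Za := by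
    left; left
    exact ⟨0, by simp⟩
  refine ⟨?_, hC0⟩
  rw [hC0]
  ext x
  constructor
  · rintro ⟨⟨u, hu, rfl⟩, hx⟩
    have hform_u : goodForm q u := mem_Za_form q a hq3 ha2 u hu
    have hform_v : goodForm q (-(q : ZMod (q ^ 4 - 1)) * u) := mem_Za_form q a hq3 ha2 _ hx
    have h : (q : ZMod (q ^ 4 - 1)) * u + (-(q : ZMod (q ^ 4 - 1)) * u) = 0 := by ring
    have := form_key q hq3 u (-(q : ZMod (q ^ 4 - 1)) * u) hform_u hform_v h
    simpa using this
  · rintro rfl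
    exact ⟨⟨0, h0Za, by simp⟩, h0Za⟩
end

section
/- Let n = q² − 1 with q > 2, and let a, b be integers with 0 ≤ a ≤ q − 1, 1 ≤ b ≤ q, and a < q − b. Then the sets A = ⋃_{i=0}^{a} C_i and B = ⋃_{i=1}^{b} C_{q−i} of q-ary cyclotomic cosets mod n satisfy |A| + |B| = 2a + 2b + 1 − ⌊b/q⌋ and A ∪ B has exactly 2a + 2b + 1 − ⌊b/q⌋ elements. -/
lemma qsq_one {q : ℕ} (hq : 1 ≤ q) : ((q : ZMod (q ^ 2 - 1))) ^ 2 = 1 := by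
  have h1 : 1 ≤ q ^ 2 := Nat.one_le_pow _ _ hq
  have h : ((q : ZMod (q ^ 2 - 1))) ^ 2 = ((q ^ 2 : ℕ) : ZMod (q ^ 2 - 1)) := by push_cast; ring
  rw [h, show ((q ^ 2 : ℕ) : ZMod (q ^ 2 - 1)) = (((q ^ 2 - 1) + 1 : ℕ) : ZMod (q ^ 2 - 1)) by
    rw [Nat.sub_add_cancel h1]]
  push_cast [ZMod.natCast_self]
  ring

lemma cycCoset_pair {q : ℕ} (hq : 1 ≤ q) (i : ℕ) :
    cycCoset q (q ^ 2 - 1) i =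
      {((i : ℕ) : ZMod (q ^ 2 - 1)), ((i * q : ℕ) : ZMod (q ^ 2 - 1))} := by
  have hq2 := qsq_one hq
  ext x
  simp only [cycCoset, Set.mem_setOf_eq, Set.mem_insert_iff, Set.mem_singleton_iff]
  constructor
  · rintro ⟨j, rfl⟩
    have hpow : ((q : ZMod (q ^ 2 - 1))) ^ j = ((q : ZMod (q ^ 2 - 1))) ^ (j % 2) := by
      conv_lhs => rw [← Nat.div_add_mod j 2]
      rw [pow_add, pow_mul, hq2, one_pow, one_mul]
    rw [hpow]
    rcases Nat.mod_two_eq_zero_or_one j with h | h <;> rw [h]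
    · left; simp
    · right; push_cast; ring
  · rintro (rfl | rfl)
    · exact ⟨0, by simp⟩
    · exact ⟨1, by push_cast; ring⟩

theorem card_union_disjoint_cosets (q a b : ℕ) (hq : 2 < q)
    (ha : a ≤ q - 1) (hb1 : 1 ≤ b) (hb2 : b ≤ q) (hab : a < q - b) :
    let A : Set (ZMod (q ^ 2 - 1)) := ⋃ i ∈ Finset.range (a + 1), cycCoset q (q ^ 2 - 1) i
    let B : Set (ZMod (q ^ 2 - 1)) := ⋃ i ∈ Finset.Icc 1 b, cycCoset q (q ^ 2 - 1) (q - i)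
    A.ncard + B.ncard = 2 * a + 2 * b + 1 - b / q ∧
      (A ∪ B).ncard = 2 * a + 2 * b + 1 - b / q := by
  intro A B
  have hb : b < q := by omega
  have hdiv : b / q = 0 := Nat.div_eq_of_lt hb
  have hq1 : 1 ≤ q := by omega
  have hqsq : 9 ≤ q ^ 2 := by nlinarith
  have hn : 8 ≤ q ^ 2 - 1 := by omega
  haveI : NeZero (q ^ 2 - 1) := ⟨by omega⟩
  -- nat-level model finsets
  set SA : Finset ℕ := Finset.range (a + 1) ∪ (Finset.Icc 1 a).image (· * q) with hSA
  set SB : Finset ℕ := Finset.Icc (q - b) (q - 1) ∪ (Finset.Icc (q - b) (q - 1)).image (· * q)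
    with hSB
  have memSA : ∀ m : ℕ, m ∈ SA ↔ m ≤ a ∨ ∃ i, 1 ≤ i ∧ i ≤ a ∧ m = i * q := by
    intro m
    simp only [hSA, Finset.mem_union, Finset.mem_range, Finset.mem_image, Finset.mem_Icc]
    constructor
    · rintro (h | ⟨i, ⟨h1, h2⟩, rfl⟩)
      · exact Or.inl (by omega)
      · exact Or.inr ⟨i, h1, h2, rfl⟩
    · rintro (h | ⟨i, h1, h2, rfl⟩)
      · exact Or.inl (by omega)
      · exact Or.inr ⟨i, ⟨h1, h2⟩, rfl⟩
  have memSB : ∀ m : ℕ, m ∈ SB ↔ (q - b ≤ m ∧ m ≤ q - 1) ∨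
      ∃ i, q - b ≤ i ∧ i ≤ q - 1 ∧ m = i * q := by
    intro m
    simp only [hSB, Finset.mem_union, Finset.mem_Icc, Finset.mem_image]
    constructor
    · rintro (h | ⟨i, ⟨h1, h2⟩, rfl⟩)
      · exact Or.inl h
      · exact Or.inr ⟨i, h1, h2, rfl⟩
    · rintro (h | ⟨i, h1, h2, rfl⟩)
      · exact Or.inl h
      · exact Or.inr ⟨i, ⟨h1, h2⟩, rfl⟩
  -- bounds
  have hlin : q + 1 ≤ q ^ 2 := by nlinarith
  have hlt : ∀ m ∈ SA ∪ SB, m < q ^ 2 - 1 := by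
    intro m hm
    have hbig : (q - 1) * q < q ^ 2 - 1 := by
      have : (q - 1) * q = q * q - q := by rw [Nat.sub_mul, one_mul]
      have hq2 : q * q = q ^ 2 := by ring
      omega
    rcases Finset.mem_union.1 hm with h | h
    · rcases (memSA m).1 h with h | ⟨i, h1, h2, rfl⟩
      · omega
      · have : i * q ≤ (q - 1) * q := Nat.mul_le_mul_right q (by omega)
        omega
    · rcases (memSB m).1 h with h | ⟨i, h1, h2, rfl⟩
      · omega
      · have : i * q ≤ (q - 1) * q := Nat.mul_le_mul_right q h2
        omega
  -- cast injective on SA ∪ SB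
  have hinj : Set.InjOn (fun m : ℕ => (m : ZMod (q ^ 2 - 1))) ↑(SA ∪ SB) := by
    intro x hx y hy hxy
    have hx' := hlt x (by simpa using hx)
    have hy' := hlt y (by simpa using hy)
    have := congrArg ZMod.val hxy
    rwa [ZMod.val_cast_of_lt hx', ZMod.val_cast_of_lt hy'] at this
  have hinjA : Set.InjOn (fun m : ℕ => (m : ZMod (q ^ 2 - 1))) ↑SA :=
    hinj.mono (by intro x hx; simp at hx ⊢; exact Or.inl hx)
  have hinjB : Set.InjOn (fun m : ℕ => (m : ZMod (q ^ 2 - 1))) ↑SB :=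
    hinj.mono (by intro x hx; simp at hx ⊢; exact Or.inr hx)
  -- set descriptions
  have hA : A = ↑(SA.image (fun m : ℕ => (m : ZMod (q ^ 2 - 1)))) := by
    ext x
    simp only [A, Set.mem_iUnion, cycCoset_pair hq1, Finset.coe_image, Set.mem_image,
      Finset.mem_coe, Finset.mem_range, Set.mem_insert_iff, Set.mem_singleton_iff,
      exists_prop]
    constructor
    · rintro ⟨i, hi, rfl | rfl⟩
      · exact ⟨i, (memSA i).2 (Or.inl (by omega)), rfl⟩
      · rcases Nat.eq_zero_or_pos i with rfl | hpos
        · exact ⟨0, (memSA 0).2 (Or.inl (by omega)), by simp⟩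
        · exact ⟨i * q, (memSA _).2 (Or.inr ⟨i, hpos, by omega, rfl⟩), rfl⟩
    · rintro ⟨m, hm, rfl⟩
      rcases (memSA m).1 hm with h | ⟨i, h1, h2, rfl⟩
      · exact ⟨m, by omega, Or.inl rfl⟩
      · exact ⟨i, by omega, Or.inr rfl⟩
  have hB : B = ↑(SB.image (fun m : ℕ => (m : ZMod (q ^ 2 - 1)))) := by
    ext x
    simp only [B, Set.mem_iUnion, cycCoset_pair hq1, Finset.coe_image, Set.mem_image,
      Finset.mem_coe, Finset.mem_Icc, Set.mem_insert_iff, Set.mem_singleton_iff,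
      exists_prop]
    constructor
    · rintro ⟨i, ⟨hi1, hi2⟩, rfl | rfl⟩
      · exact ⟨q - i, (memSB _).2 (Or.inl (by omega)), rfl⟩
      · exact ⟨(q - i) * q, (memSB _).2 (Or.inr ⟨q - i, by omega, by omega, rfl⟩), rfl⟩
    · rintro ⟨m, hm, rfl⟩
      rcases (memSB m).1 hm with ⟨h1, h2⟩ | ⟨i, h1, h2, rfl⟩
      · exact ⟨q - m, ⟨by omega, by omega⟩, Or.inl (by rw [show q - (q - m) = m by omega])⟩
      · exact ⟨q - i, ⟨by omega, by omega⟩, Or.inr (by rw [show q - (q - i) = i by omega])⟩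
  -- cardinalities of the nat models
  have hq_le_mul : ∀ i : ℕ, 1 ≤ i → q ≤ i * q := fun i hi => Nat.le_mul_of_pos_left q hi
  have cardSA : SA.card = 2 * a + 1 := by
    rw [hSA, Finset.card_union_of_disjoint, Finset.card_range,
      Finset.card_image_of_injective _ (fun x y h => Nat.eq_of_mul_eq_mul_right (by omega) h),
      Nat.card_Icc]
    · omega
    · rw [Finset.disjoint_left]
      rintro m hm hm'
      simp only [Finset.mem_range] at hm
      simp only [Finset.mem_image, Finset.mem_Icc] at hm'
      obtain ⟨i, ⟨h1, h2⟩, rfl⟩ := hm'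
      have := hq_le_mul i h1
      omega
  have cardSB : SB.card = 2 * b := by
    rw [hSB, Finset.card_union_of_disjoint, Nat.card_Icc,
      Finset.card_image_of_injective _ (fun x y h => Nat.eq_of_mul_eq_mul_right (by omega) h),
      Nat.card_Icc]
    · omega
    · rw [Finset.disjoint_left]
      rintro m hm hm'
      simp only [Finset.mem_Icc] at hm
      simp only [Finset.mem_image, Finset.mem_Icc] at hm'
      obtain ⟨i, ⟨h1, h2⟩, rfl⟩ := hm'
      have := hq_le_mul i (by omega)
      omega
  -- nat models are disjoint
  have hdisj : Disjoint SA SB := by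
    rw [Finset.disjoint_left]
    intro m hm hm'
    rcases (memSA m).1 hm with h | ⟨i, h1, h2, rfl⟩
    · rcases (memSB m).1 hm' with h' | ⟨k, h1', h2', rfl⟩
      · omega
      · have := hq_le_mul k (by omega)
        omega
    · rcases (memSB (i * q)).1 hm' with h' | ⟨k, h1', h2', he⟩
      · have := hq_le_mul i h1
        omega
      · have : i = k := Nat.eq_of_mul_eq_mul_right (by omega) he
        omega
  -- conclude
  have hcA : A.ncard = 2 * a + 1 := by
    rw [hA, Set.ncard_coe_finset, Finset.card_image_of_injOn hinjA, cardSA]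
  have hcB : B.ncard = 2 * b := by
    rw [hB, Set.ncard_coe_finset, Finset.card_image_of_injOn hinjB, cardSB]
  have hU : A ∪ B = ↑((SA ∪ SB).image (fun m : ℕ => (m : ZMod (q ^ 2 - 1)))) := by
    rw [Finset.image_union, Finset.coe_union, ← hA, ← hB]
  have hcU : (A ∪ B).ncard = 2 * a + 1 + 2 * b := by
    rw [hU, Set.ncard_coe_finset, Finset.card_image_of_injOn hinj,
      Finset.card_union_of_disjoint hdisj, cardSA, cardSB]
  refine ⟨by omega, by omega⟩
end
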